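/- arXiv:math/0105109 — 2 statements merged into one kernel-verified Lean document; each statement's English description precedes it below -/
import Mathlib

section
/- The nilpotent shift matrix Ξ_N converges in *-moments to a Haar unitary: for any word s_1,…,s_n ∈ {1,*}, the normalized trace tr_N(Ξ_N^{s_1}⋯Ξ_N^{s_n}) converges as N → ∞ to the corresponding *-moment of a Haar unitary, i.e. to 1 if the word reduces (using u*u = uu* = 1) to the identity and the signed exponent sum is 0, and otherwise is within O(1/N) of 0; in particular |tr_N(Ξ_N^{s_1}⋯Ξ_N^{s_n}) − μ(s)| ≤ n/N where μ(s) is the Haar unitary *-moment. -/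
/-!
`Ξ_N` is the matrix of the partial bijection `i ↦ i - 1` of `{0, …, N - 1}` and `Ξ_Nᴴ` that of its
inverse, so a word in `Ξ_N, Ξ_Nᴴ` is the matrix of the composite partial bijection. The composite
moves every point of its domain by the same offset, the signed exponent sum `σ`, and its trace
counts its fixed points: there are none if `σ ≠ 0`, and if `σ = 0` they form its whole domain.
Each letter is undefined at only one point, so that domain misses at most `n` of the `N` points.
-/

open Matrix

/-- The `N × N` nilpotent shift matrix: `(Ξ_N)_{ij} = 1` if `i = j + 1`, else `0`. -/
def shiftMatrix (N : ℕ) : Matrix (Fin N) (Fin N) ℂ :=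
  Matrix.of fun i j => if (i : ℕ) = (j : ℕ) + 1 then 1 else 0

open Finset

namespace PEquiv

section Matrix

variable {m n R : Type*} [DecidableEq m] [DecidableEq n]

theorem conjTranspose_toMatrix [NonAssocSemiring R] [StarRing R] (f : m ≃. n) :
    (f.toMatrix : Matrix m n R)ᴴ = f.symm.toMatrix := by
  ext i j
  simp [toMatrix_apply, mem_iff_mem f, apply_ite star]

theorem trace_toMatrix [Fintype n] [AddCommMonoidWithOne R] (f : n ≃. n) :
    (f.toMatrix : Matrix n n R).trace = #{i | i ∈ f i} := by
  simp [trace, toMatrix_apply, Finset.sum_boole]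

theorem toMatrix_foldr_trans [Fintype n] [NonAssocSemiring R] {k : ℕ} (f : Fin k → n ≃. n) :
    ((List.ofFn f).foldr PEquiv.trans (PEquiv.refl n)).toMatrix =
      (List.ofFn fun i => ((f i).toMatrix : Matrix n n R)).prod := by
  induction k with
  | zero => simp
  | succ k ih => simp [List.ofFn_succ, toMatrix_trans, ih]

end Matrix

section Defect

variable {α : Type*} [Fintype α] [DecidableEq α]

theorem card_trans_eq_none_le (f g : α ≃. α) :
    #{a | f.trans g a = none} ≤ #{a | f a = none} + #{a | g a = none} := by
  have hsub : ({a | f.trans g a = none} : Finset α) ⊆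
      ({a | f a = none} : Finset α) ∪ ({a | ∃ b, f a = some b ∧ g b = none} : Finset α) := by
    intro a
    simp only [mem_filter, mem_univ, true_and, mem_union]
    cases h : f a <;> simp_all [PEquiv.trans]
  have hinj : #{a | ∃ b, f a = some b ∧ g b = none} ≤ #{a | g a = none} := by
    refine card_le_card_of_injOn (fun a => (f a).getD a) (fun a ha => ?_)
      (fun a ha a' ha' h => ?_)
    · obtain ⟨b, hb, hgb⟩ := (mem_filter.1 ha).2
      simpa [hb] using hgb
    · obtain ⟨b, hb, -⟩ := (mem_filter.1 ha).2
      obtain ⟨b', hb', -⟩ := (mem_filter.1 ha').2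
      simp only [hb, hb', Option.getD_some] at h
      subst h
      exact f.inj hb hb'
  exact (card_le_card hsub).trans ((card_union_le _ _).trans (by omega))

theorem card_foldr_trans_eq_none_le {k : ℕ} (f : Fin k → α ≃. α) :
    #{a | (List.ofFn f).foldr PEquiv.trans (PEquiv.refl α) a = none} ≤
      ∑ i, #{a | f i a = none} := by
  induction k with
  | zero => simp
  | succ k ih =>
    simp only [List.ofFn_succ, List.foldr_cons, Fin.sum_univ_succ]
    exact (card_trans_eq_none_le _ _).trans (by gcongr; exact ih _)

end Defect

section Offset

variable {N : ℕ} {R : Type*}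

def HasOffset (f : Fin N ≃. Fin N) (d : ℤ) : Prop :=
  ∀ i j, j ∈ f i → (i : ℤ) = j + d

theorem hasOffset_refl : (PEquiv.refl (Fin N)).HasOffset 0 := by
  intro i j h
  simp_all

theorem HasOffset.symm {f : Fin N ≃. Fin N} {d : ℤ} (hf : f.HasOffset d) :
    f.symm.HasOffset (-d) := by
  intro i j h
  have := hf j i (by rwa [← mem_iff_mem])
  omega

theorem HasOffset.trans {f g : Fin N ≃. Fin N} {d e : ℤ} (hf : f.HasOffset d)
    (hg : g.HasOffset e) : (f.trans g).HasOffset (d + e) := by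
  intro i k h
  obtain ⟨j, hij, hjk⟩ := (mem_trans f g i k).1 h
  have := hf i j hij
  have := hg j k hjk
  omega

theorem hasOffset_foldr_trans {k : ℕ} {f : Fin k → Fin N ≃. Fin N} {d : Fin k → ℤ}
    (hf : ∀ i, (f i).HasOffset (d i)) :
    ((List.ofFn f).foldr PEquiv.trans (PEquiv.refl _)).HasOffset (∑ i, d i) := by
  induction k with
  | zero => simpa using hasOffset_refl
  | succ k ih =>
    simp only [List.ofFn_succ, List.foldr_cons, Fin.sum_univ_succ]
    exact (hf 0).trans (ih fun i => hf i.succ)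

theorem HasOffset.notMem_self {f : Fin N ≃. Fin N} {d : ℤ} (hf : f.HasOffset d) (hd : d ≠ 0)
    (i : Fin N) : i ∉ f i :=
  fun h => hd (by have := hf i i h; omega)

theorem HasOffset.mem_self_iff {f : Fin N ≃. Fin N} (hf : f.HasOffset 0) (i : Fin N) :
    i ∈ f i ↔ f i ≠ none := by
  refine ⟨fun h => by simp_all, fun h => ?_⟩
  obtain ⟨j, hj⟩ := Option.ne_none_iff_exists'.1 h
  have := hf i j hj
  rwa [show j = i from Fin.ext (by omega)] at hj

theorem trace_toMatrix_of_hasOffset_ne_zero [AddCommMonoidWithOne R] {f : Fin N ≃. Fin N}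
    {d : ℤ} (hf : f.HasOffset d) (hd : d ≠ 0) :
    (f.toMatrix : Matrix (Fin N) (Fin N) R).trace = 0 := by
  simp [trace_toMatrix, hf.notMem_self hd]

theorem trace_toMatrix_of_hasOffset_zero [AddCommGroupWithOne R] {f : Fin N ≃. Fin N}
    (hf : f.HasOffset 0) :
    (f.toMatrix : Matrix (Fin N) (Fin N) R).trace = N - #{i | f i = none} := by
  have hsplit := card_filter_add_card_filter_not (s := univ) (fun i => f i ≠ none)
  simp only [not_not, card_univ, Fintype.card_fin] at hsplit
  rw [trace_toMatrix, eq_sub_iff_add_eq]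
  simp only [hf.mem_self_iff, ← Nat.cast_add]
  exact congrArg Nat.cast hsplit

end Offset

end PEquiv

open PEquiv

def shiftPEquiv (N : ℕ) : Fin N ≃. Fin N where
  toFun i := if h : 0 < (i : ℕ) then some ⟨i - 1, by omega⟩ else none
  invFun j := if h : (j : ℕ) + 1 < N then some ⟨j + 1, h⟩ else none
  inv i j := by
    have := i.isLt
    split_ifs <;> simp [Fin.ext_iff] <;> omega

theorem shiftMatrix_eq_toMatrix (N : ℕ) : shiftMatrix N = (shiftPEquiv N).toMatrix := by
  ext i j
  simp only [shiftMatrix, shiftPEquiv, of_apply, toMatrix_apply, coe_mk]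
  split_ifs <;> simp_all [Fin.ext_iff]; omega

theorem shiftPEquiv_hasOffset (N : ℕ) : (shiftPEquiv N).HasOffset 1 := by
  intro i j h
  simp only [shiftPEquiv, coe_mk] at h
  split_ifs at h
  · simp only [Option.mem_def, Option.some.injEq] at h
    subst h
    simp only
    omega
  · simp at h

theorem card_shiftPEquiv_eq_none_le (N : ℕ) : #{i | shiftPEquiv N i = none} ≤ 1 := by
  refine card_le_one.2 fun i hi j hj => ?_
  simp only [shiftPEquiv, coe_mk, mem_filter, mem_univ, true_and, dite_eq_right_iff,
    reduceCtorEq, imp_false, not_lt] at hi hj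
  omega

theorem card_shiftPEquiv_symm_eq_none_le (N : ℕ) :
    #{i | (shiftPEquiv N).symm i = none} ≤ 1 := by
  refine card_le_one.2 fun i hi j hj => ?_
  simp only [shiftPEquiv, PEquiv.symm, coe_mk, mem_filter, mem_univ, true_and, dite_eq_right_iff,
    reduceCtorEq, imp_false, not_lt] at hi hj
  omega

section Word

variable (N : ℕ) {n : ℕ} (s : Fin n → Bool)

def shiftWordPEquiv : Fin N ≃. Fin N :=
  (List.ofFn fun i => if s i then (shiftPEquiv N).symm else shiftPEquiv N).foldr
    PEquiv.trans (PEquiv.refl _)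

theorem toMatrix_shiftWordPEquiv :
    (shiftWordPEquiv N s).toMatrix =
      (List.ofFn fun i => if s i then (shiftMatrix N)ᴴ else shiftMatrix N).prod := by
  simp only [shiftWordPEquiv, toMatrix_foldr_trans, apply_ite PEquiv.toMatrix,
    shiftMatrix_eq_toMatrix, conjTranspose_toMatrix]

theorem shiftWordPEquiv_hasOffset :
    (shiftWordPEquiv N s).HasOffset (∑ i, if s i then -1 else 1) :=
  hasOffset_foldr_trans fun i => by
    split_ifs
    exacts [(shiftPEquiv_hasOffset N).symm, shiftPEquiv_hasOffset N]

theorem card_shiftWordPEquiv_eq_none_le : #{i | shiftWordPEquiv N s i = none} ≤ n := by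
  refine (card_foldr_trans_eq_none_le _).trans ((sum_le_sum fun i _ => ?_).trans_eq
    (by simp : ∑ _ : Fin n, 1 = n))
  split_ifs
  exacts [card_shiftPEquiv_symm_eq_none_le N, card_shiftPEquiv_eq_none_le N]

end Word

/-- `Ξ_N` converges in `*`-moments to a Haar unitary: for any word
`s : Fin n → Bool` (with `true` meaning `*`), the normalized trace of the
corresponding word in `Ξ_N, Ξ_Nᴴ` is within `n/N` of the Haar unitary
`*`-moment, which is `1` if the signed exponent sum vanishes and `0` otherwise. -/
theorem shiftMatrix_starMoments_haarUnitary (N : ℕ) (hN : 0 < N) (n : ℕ) (s : Fin n → Bool) :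
    ‖(List.ofFn fun i : Fin n =>
            if s i then (shiftMatrix N)ᴴ else shiftMatrix N).prod.trace / (N : ℂ)
          - (if (∑ i : Fin n, (if s i then (-1 : ℤ) else 1)) = 0 then (1 : ℂ) else 0)‖
      ≤ (n : ℝ) / N := by
  have hW := shiftWordPEquiv_hasOffset N s
  rw [← toMatrix_shiftWordPEquiv]
  split_ifs with hσ
  · rw [hσ] at hW
    rw [trace_toMatrix_of_hasOffset_zero hW]
    have hD := card_shiftWordPEquiv_eq_none_le N s
    set D := #{i | shiftWordPEquiv N s i = none}
    calc ‖((N : ℂ) - D) / N - 1‖ = ‖-(D : ℂ) / N‖ := by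
          rw [sub_div, div_self (Nat.cast_ne_zero.2 hN.ne'), sub_sub_cancel_left, neg_div]
      _ = D / N := by simp only [norm_div, norm_neg, Complex.norm_natCast]
      _ ≤ n / N := by gcongr
  · rw [trace_toMatrix_of_hasOffset_ne_zero hW hσ, zero_div, sub_zero, norm_zero]
    positivity
end

section
/- For every ε > 0 and every M > 0 there exists an even real polynomial Q such that log r ≤ Q(r) for every r > 0, and Q(r) ≤ (1/2)·log(r² + ε) for every r ∈ [0, M]. -/
/-!
Substituting `t = r²`, it suffices to find a polynomial `P` with `log t ≤ P t` for `t > 0` and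
`P t ≤ log (t + ε)` on `[0, M²]`, and to take `Q r = P (r²) / 2`. Fix `b > M²`. The function
`log (t + ε / 2)` is continuous on `[0, b]`, lies at least a fixed `m > 0` above `log t` there and
at least `m` below `log (t + ε)` on `[0, M²]`, so a Weierstrass approximation `p` within `m / 2`
does the job on `[0, b]`. Adding a multiple of a high power `(t / b) ^ n`, which is at most `m / 2`
on `[0, M²]` but dominates `t - p t ≥ log t - p t` for `t ≥ b`, makes the lower bound hold for all
`t > 0`.
-/

open Polynomial Real Set Filter Topology

theorem Polynomial.exists_eval_le_mul_div_pow_natDegree (q : ℝ[X]) {b : ℝ} (hb : 0 < b) :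
    ∃ A, ∀ t, b ≤ t → q.eval t ≤ A * (t / b) ^ q.natDegree := by
  refine ⟨∑ i ∈ Finset.range (q.natDegree + 1), |q.coeff i| * b ^ i, fun t hbt => ?_⟩
  have hbt' : 1 ≤ t / b := (one_le_div hb).2 hbt
  rw [eval_eq_sum_range, Finset.sum_mul]
  refine Finset.sum_le_sum fun i hi => ?_
  calc q.coeff i * t ^ i ≤ |q.coeff i| * t ^ i :=
        mul_le_mul_of_nonneg_right (le_abs_self _) (pow_nonneg (hb.le.trans hbt) i)
    _ = |q.coeff i| * b ^ i * (t / b) ^ i := by rw [div_pow]; field_simp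
    _ ≤ |q.coeff i| * b ^ i * (t / b) ^ q.natDegree :=
        mul_le_mul_of_nonneg_left
          (pow_le_pow_right₀ hbt' (Nat.lt_succ_iff.mp (Finset.mem_range.mp hi))) (by positivity)

theorem Polynomial.exists_nonneg_le_on_Icc_and_ge_eval_on_Ici (q : ℝ[X]) {a b δ : ℝ}
    (ha : 0 ≤ a) (hab : a < b) (hδ : 0 < δ) :
    ∃ R : ℝ[X], (∀ t, 0 ≤ t → 0 ≤ R.eval t) ∧ (∀ t ∈ Icc 0 a, R.eval t ≤ δ) ∧
      ∀ t, b ≤ t → q.eval t ≤ R.eval t := by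
  have hb : 0 < b := ha.trans_lt hab
  obtain ⟨A, hA⟩ := q.exists_eval_le_mul_div_pow_natDegree hb
  set K := max A 0
  have hK : 0 ≤ K := le_max_right _ _
  have hsmall : Tendsto (fun n : ℕ => K * (a / b) ^ n) atTop (𝓝 0) := by
    simpa using (tendsto_pow_atTop_nhds_zero_of_lt_one (div_nonneg ha hb.le)
      ((div_lt_one hb).2 hab)).const_mul K
  obtain ⟨n, hnδ, hdn⟩ :=
    ((hsmall.eventually (gt_mem_nhds hδ)).and (eventually_ge_atTop q.natDegree)).exists
  have heval : ∀ t, (C (K / b ^ n) * X ^ n).eval t = K * (t / b) ^ n := fun t => by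
    simp only [eval_mul, eval_C, eval_pow, eval_X, div_pow]
    ring
  refine ⟨C (K / b ^ n) * X ^ n, fun t ht => ?_, fun t ht => ?_, fun t hbt => ?_⟩
  · rw [heval]; positivity
  · rw [heval]
    calc K * (t / b) ^ n ≤ K * (a / b) ^ n :=
          mul_le_mul_of_nonneg_left (pow_le_pow_left₀ (div_nonneg ht.1 hb.le)
            (div_le_div_of_nonneg_right ht.2 hb.le) n) hK
      _ ≤ δ := hnδ.le
  · have hbt' : 1 ≤ t / b := (one_le_div hb).2 hbt
    rw [heval]
    calc q.eval t ≤ A * (t / b) ^ q.natDegree := hA t hbt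
      _ ≤ K * (t / b) ^ q.natDegree :=
          mul_le_mul_of_nonneg_right (le_max_left _ _) (pow_nonneg (zero_le_one.trans hbt') _)
      _ ≤ K * (t / b) ^ n := mul_le_mul_of_nonneg_left (pow_le_pow_right₀ hbt' hdn) hK

theorem exists_polynomial_between_of_continuousOn {L U f : ℝ → ℝ} {a b m : ℝ} (q : ℝ[X])
    (ha : 0 ≤ a) (hab : a < b) (hm : 0 < m) (hf : ContinuousOn f (Icc 0 b))
    (hLf : ∀ t ∈ Ioc 0 b, L t + m ≤ f t) (hfU : ∀ t ∈ Icc 0 a, f t + m ≤ U t)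
    (hLq : ∀ t, b ≤ t → L t ≤ q.eval t) :
    ∃ P : ℝ[X], (∀ t, 0 < t → L t ≤ P.eval t) ∧ ∀ t ∈ Icc 0 a, P.eval t ≤ U t := by
  obtain ⟨p, hp⟩ := exists_polynomial_near_of_continuousOn 0 b f hf (m / 2) (half_pos hm)
  obtain ⟨R, hR0, hRa, hRb⟩ :=
    (q - p).exists_nonneg_le_on_Icc_and_ge_eval_on_Ici ha hab (half_pos hm)
  refine ⟨p + R, fun t ht => ?_, fun t ht => ?_⟩
  · rw [eval_add]
    rcases le_or_gt t b with htb | hbt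
    · have hpf := (abs_lt.1 (hp t ⟨ht.le, htb⟩)).1
      linarith [hLf t ⟨ht, htb⟩, hR0 t ht.le]
    · have := hRb t hbt.le
      rw [eval_sub] at this
      linarith [hLq t hbt.le]
  · have hpf := (abs_lt.1 (hp t ⟨ht.1, ht.2.trans hab.le⟩)).2
    rw [eval_add]
    linarith [hfU t ht, hRa t ht]

theorem Real.log_add_sub_log_le_of_le {s S δ : ℝ} (hs : 0 < s) (hsS : s ≤ S) (hδ : 0 ≤ δ) :
    log (S + δ) - log S ≤ log (s + δ) - log s := by
  have hS : 0 < S := hs.trans_le hsS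
  rw [sub_le_sub_iff, ← log_mul (by positivity) hs.ne', ← log_mul (by positivity) hS.ne']
  exact log_le_log (by positivity) (by nlinarith)

theorem exists_polynomial_log_le_le_log_add {ε a : ℝ} (hε : 0 < ε) (ha : 0 ≤ a) :
    ∃ P : ℝ[X], (∀ t, 0 < t → log t ≤ P.eval t) ∧ ∀ t ∈ Icc 0 a, P.eval t ≤ log (t + ε) := by
  set S := a + 1 + ε / 2 with hS_def
  set m := log (S + ε / 2) - log S
  have hS : 0 < S := by positivity
  have hm : 0 < m := sub_pos.2 (log_lt_log hS (by linarith))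
  refine exists_polynomial_between_of_continuousOn X ha (lt_add_one a) hm
    (f := fun t => log (t + ε / 2)) ?_ (fun t ht => ?_) (fun t ht => ?_)
    (fun t hbt => by simpa using log_le_self (by linarith))
  · exact ContinuousOn.log (by fun_prop) fun t ht => by linarith [ht.1]
  · have h := log_add_sub_log_le_of_le ht.1 (show t ≤ S by linarith [ht.2, hS_def])
      (half_pos hε).le
    linarith
  · have h := log_add_sub_log_le_of_le (show 0 < t + ε / 2 by linarith [ht.1])
      (show t + ε / 2 ≤ S by linarith [ht.2, hS_def]) (half_pos hε).le
    rw [add_assoc t, add_halves] at h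
    linarith

theorem exists_even_polynomial_log_bounds_general (ε M : ℝ) (hε : 0 < ε) :
    ∃ Q : Polynomial ℝ,
      (∀ r : ℝ, Q.eval (-r) = Q.eval r) ∧
      (∀ r : ℝ, 0 < r → Real.log r ≤ Q.eval r) ∧
      (∀ r ∈ Set.Icc (0 : ℝ) M, Q.eval r ≤ Real.log (r ^ 2 + ε) / 2) := by
  obtain ⟨P, hlow, hup⟩ := exists_polynomial_log_le_le_log_add hε (sq_nonneg M)
  have heval : ∀ r, (C 2⁻¹ * P.comp (X ^ 2)).eval r = P.eval (r ^ 2) / 2 := fun r => by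
    simp only [eval_mul, eval_C, eval_comp, eval_pow, eval_X]
    ring
  refine ⟨C 2⁻¹ * P.comp (X ^ 2), fun r => by simp only [heval, neg_sq], fun r hr => ?_,
    fun r hr => ?_⟩
  · have h := hlow (r ^ 2) (by positivity)
    rw [log_pow, Nat.cast_ofNat] at h
    rw [heval]
    linarith
  · rw [heval]
    have h := hup (r ^ 2) ⟨sq_nonneg r, pow_le_pow_left₀ hr.1 hr.2 2⟩
    linarith

/-- For every `ε > 0` and `M > 0` there is an even real polynomial `Q` with
`log r ≤ Q(r)` for all `r > 0` and `Q(r) ≤ (1/2) log(r² + ε)` on `[0, M]`. -/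
theorem exists_even_polynomial_log_bounds (ε M : ℝ) (hε : 0 < ε) (hM : 0 < M) :
    ∃ Q : Polynomial ℝ,
      (∀ r : ℝ, Q.eval (-r) = Q.eval r) ∧
      (∀ r : ℝ, 0 < r → Real.log r ≤ Q.eval r) ∧
      (∀ r ∈ Set.Icc (0 : ℝ) M, Q.eval r ≤ Real.log (r ^ 2 + ε) / 2) :=
  exists_even_polynomial_log_bounds_general ε M hε
end
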